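/- With the same setup (Z finite labeled dataset, teacher h^t, student h^s, risks as 0/1 averages, acc(h^t) and err(h^t) both nonempty), suppose R^{h^t}_{acc(h^t)}(h^s) > 0 and R_Z(h^t) > 0. Then R_Z(h^s) ≤ R_Z(h^t) if and only if R^{h^t}_{err(h^t)}(h^s) / R^{h^t}_{acc(h^t)}(h^s) ≥ 1/R_Z(h^t) − 1. -/

import Mathlib

open Finset

variable {ι X : Type*}

/-- Empirical 0/1 risk of classifier `h` on labeled set `S`. -/
noncomputable def risk (S : Finset ι) (x : ι → X) (y : ι → Bool) (h : X → Bool) : ℝ :=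
  (S.filter (fun i => h (x i) ≠ y i)).card / S.card

/-- Disagreement rate of student `hs` with teacher `ht` on set `S`. -/
noncomputable def tsRisk (S : Finset ι) (x : ι → X) (ht hs : X → Bool) : ℝ :=
  (S.filter (fun i => ht (x i) ≠ hs (x i))).card / S.card

/-- Points of `Z` where the teacher is correct. -/
def accSet (Z : Finset ι) (x : ι → X) (y : ι → Bool) (ht : X → Bool) : Finset ι :=
  Z.filter (fun i => ht (x i) = y i)

/-- Points of `Z` where the teacher is wrong. -/
def errSet (Z : Finset ι) (x : ι → X) (y : ι → Bool) (ht : X → Bool) : Finset ι :=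
  Z.filter (fun i => ht (x i) ≠ y i)

/-!
Split `Z` into the points where the teacher is right (`A`) and wrong (`E`), and let `a`, `e`
count the student–teacher disagreements on `A` and `E`. With binary labels the student errs on
`A` exactly where it disagrees with the teacher and on `E` exactly where it agrees, so it makes
`a + (|E| - e)` mistakes against the teacher's `|E|`: it is at least as good iff `a ≤ e`.
Since `1 / R_Z(h^t) - 1 = |A| / |E|`, the ratio condition `(e / |E|) / (a / |A|) ≥ |A| / |E|`
says the same thing.
-/

section Counting

variable (Z : Finset ι) (x : ι → X) (y : ι → Bool) (ht hs : X → Bool)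

lemma card_accSet_add_card_errSet : #(accSet Z x y ht) + #(errSet Z x y ht) = #Z :=
  card_filter_add_card_filter_not _

lemma card_filter_ne_label_eq :
    #(Z.filter fun i => hs (x i) ≠ y i) =
      #((accSet Z x y ht).filter fun i => ht (x i) ≠ hs (x i)) +
        #((errSet Z x y ht).filter fun i => ht (x i) = hs (x i)) := by
  rw [← card_filter_add_card_filter_not (p := fun i => ht (x i) = y i), filter_filter,
    filter_filter, accSet, errSet, filter_filter, filter_filter]
  congr 2 <;> refine filter_congr fun i _ => ?_ <;>
    cases ht (x i) <;> cases hs (x i) <;> cases y i <;> decide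

end Counting

lemma risk_le_risk_iff {Z : Finset ι} (hZ : Z.Nonempty) (x : ι → X) (y : ι → Bool)
    (h₁ h₂ : X → Bool) :
    risk Z x y h₁ ≤ risk Z x y h₂ ↔
      #(Z.filter fun i => h₁ (x i) ≠ y i) ≤ #(Z.filter fun i => h₂ (x i) ≠ y i) := by
  rw [risk, risk, div_le_div_iff_of_pos_right (by exact_mod_cast hZ.card_pos), Nat.cast_le]

lemma one_div_risk_sub_one {Z : Finset ι} {x : ι → X} {y : ι → Bool} {ht : X → Bool}
    (herr : (errSet Z x y ht).Nonempty) :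
    1 / risk Z x y ht - 1 = #(accSet Z x y ht) / #(errSet Z x y ht) := by
  have hE : (#(errSet Z x y ht) : ℝ) ≠ 0 := by exact_mod_cast herr.card_pos.ne'
  change 1 / ((#(errSet Z x y ht) : ℝ) / #Z) - 1 = _
  rw [← card_accSet_add_card_errSet Z x y ht, Nat.cast_add]
  field_simp
  ring

lemma div_le_div_div_div_iff {A E a e : ℝ} (hA : 0 < A) (hE : 0 < E) (ha : 0 < a) :
    A / E ≤ e / E / (a / A) ↔ a ≤ e := by
  have : e / E / (a / A) = A / E * (e / a) := by field_simp
  rw [this, le_mul_iff_one_le_right (by positivity), one_le_div ha]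

theorem truth_over_teacher_general (Z : Finset ι) (x : ι → X) (y : ι → Bool) (ht hs : X → Bool)
    (hacc : (accSet Z x y ht).Nonempty) (herr : (errSet Z x y ht).Nonempty)
    (haccpos : 0 < tsRisk (accSet Z x y ht) x ht hs) :
    risk Z x y hs ≤ risk Z x y ht ↔
      tsRisk (errSet Z x y ht) x ht hs / tsRisk (accSet Z x y ht) x ht hs ≥
        1 / risk Z x y ht - 1 := by
  have hdisagree : 0 < #((accSet Z x y ht).filter fun i => ht (x i) ≠ hs (x i)) := by
    rw [tsRisk, div_pos_iff_of_pos_right (by exact_mod_cast hacc.card_pos)] at haccpos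
    exact_mod_cast haccpos
  rw [ge_iff_le, one_div_risk_sub_one herr, tsRisk, tsRisk,
    div_le_div_div_div_iff (by exact_mod_cast hacc.card_pos) (by exact_mod_cast herr.card_pos)
      (by exact_mod_cast hdisagree), Nat.cast_le,
    risk_le_risk_iff (hacc.mono (filter_subset _ _)), card_filter_ne_label_eq Z x y ht hs]
  have hsplit : #((errSet Z x y ht).filter fun i => ht (x i) = hs (x i)) +
      #((errSet Z x y ht).filter fun i => ht (x i) ≠ hs (x i)) = #(errSet Z x y ht) :=
    card_filter_add_card_filter_not _
  change _ ≤ #(errSet Z x y ht) ↔ _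
  omega

theorem truth_over_teacher (Z : Finset ι) (x : ι → X) (y : ι → Bool) (ht hs : X → Bool)
    (hacc : (accSet Z x y ht).Nonempty) (herr : (errSet Z x y ht).Nonempty)
    (haccpos : 0 < tsRisk (accSet Z x y ht) x ht hs)
    (htpos : 0 < risk Z x y ht) :
    risk Z x y hs ≤ risk Z x y ht ↔
      tsRisk (errSet Z x y ht) x ht hs / tsRisk (accSet Z x y ht) x ht hs ≥
        1 / risk Z x y ht - 1 :=
  truth_over_teacher_general Z x y ht hs hacc herr haccpos
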